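/- arXiv:2112.01798 — 2 statements merged into one kernel-verified Lean document; each statement's English description precedes it below -/
import Mathlib

section
/- Under Assumption A, let {x^k} with parameters {γ_k} be generated by the monotone proximal gradient method, let {x^k}_{k∈K} be a subsequence converging to some point x*, and assume that ∇f : 𝕏 → 𝕏 is locally Lipschitz continuous around x*. Then the subsequence {γ_k}_{k∈K} is bounded. (Corollary 3.5.) -/
open Filter Topology RealInnerProductSpace

noncomputable section

variable {E : Type*} [NormedAddCommGroup E] [InnerProductSpace ℝ E] [FiniteDimensional ℝ E]

/-- The objective `ψ = f + φ`, with values in `EReal`. -/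
def psi (f : E → ℝ) (φ : E → EReal) (x : E) : EReal :=
  (f x : EReal) + φ x

/-- `φ` is bounded from below by an affine function. -/
def AffineBoundedBelow (φ : E → EReal) : Prop :=
  ∃ (a : E) (b : ℝ), ∀ x : E, ((⟪a, x⟫ + b : ℝ) : EReal) ≤ φ x

/-- Objective of the proximal subproblem at `xb` with parameter `γ`. -/
def proxObj (f : E → ℝ) (φ : E → EReal) (xb : E) (γ : ℝ) (x : E) : EReal :=
  ((f xb + ⟪gradient f xb, x - xb⟫ + γ / 2 * ‖x - xb‖ ^ 2 : ℝ) : EReal) + φ x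

/-- `x` is a global minimizer of the proximal subproblem at `xb` with parameter `γ`. -/
def IsProxMin (f : E → ℝ) (φ : E → EReal) (xb : E) (γ : ℝ) (x : E) : Prop :=
  ∀ y : E, proxObj f φ xb γ x ≤ proxObj f φ xb γ y

/-- Fréchet (regular) subdifferential of `φ` at `x`. -/
def FrechetSubdiff (φ : E → EReal) (x : E) : Set E :=
  {η : E | ∀ ε : ℝ, 0 < ε →
    ∀ᶠ y in 𝓝[≠] x, φ x + ((⟪η, y - x⟫ - ε * ‖y - x‖ : ℝ) : EReal) ≤ φ y}

/-- Limiting (Mordukhovich) subdifferential of `φ` at `x`. -/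
def LimitingSubdiff (φ : E → EReal) (x : E) : Set E :=
  {η : E | ∃ u v : ℕ → E,
    Tendsto u atTop (𝓝 x) ∧
    Tendsto (fun j => φ (u j)) atTop (𝓝 (φ x)) ∧
    Tendsto v atTop (𝓝 η) ∧
    ∀ j : ℕ, v j ∈ FrechetSubdiff φ (u j)}

/-- `x` is an M-stationary point of `min f + φ`. -/
def MStationary (f : E → ℝ) (φ : E → EReal) (x : E) : Prop :=
  φ x ≠ ⊤ ∧ -gradient f x ∈ LimitingSubdiff φ x

/-- `ψ` is bounded from below on `dom φ`. -/
def PsiBddBelow (f : E → ℝ) (φ : E → EReal) : Prop :=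
  ∃ c : ℝ, ∀ z : E, φ z ≠ ⊤ → (c : EReal) ≤ psi f φ z

/-- The monotone proximal gradient method (Algorithm 3.1). -/
structure MonoPG (f : E → ℝ) (φ : E → EReal) (τ γmin γmax δ : ℝ)
    (x : ℕ → E) (γ : ℕ → ℝ) : Prop where
  dom : ∀ k : ℕ, φ (x k) ≠ ⊤
  stepsize : ∀ k : ℕ, ∃ γ0 : ℝ, ∃ i : ℕ, γ0 ∈ Set.Icc γmin γmax ∧ γ k = τ ^ i * γ0 ∧
    (1 ≤ i → ∃ xh : E, IsProxMin f φ (x k) (γ k / τ) xh ∧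
      psi f φ (x k) < psi f φ xh + ((δ * (γ k / τ) / 2 * ‖xh - x k‖ ^ 2 : ℝ) : EReal))
  isMin : ∀ k : ℕ, IsProxMin f φ (x k) (γ k) (x (k + 1))
  accept : ∀ k : ℕ,
    psi f φ (x (k + 1)) + ((δ * γ k / 2 * ‖x (k + 1) - x k‖ ^ 2 : ℝ) : EReal) ≤ psi f φ (x k)

/-- The nonmonotone reference value `max_{j=0,…,min{k,m}} ψ(x^{k-j})`. -/
def nmax (f : E → ℝ) (φ : E → EReal) (x : ℕ → E) (m k : ℕ) : EReal :=
  (Finset.range (min k m + 1)).sup fun j => psi f φ (x (k - j))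

/-- The nonmonotone proximal gradient method (Algorithm 4.1). -/
structure NonmonoPG (f : E → ℝ) (φ : E → EReal) (τ γmin γmax δ : ℝ) (m : ℕ)
    (x : ℕ → E) (γ : ℕ → ℝ) : Prop where
  dom : ∀ k : ℕ, φ (x k) ≠ ⊤
  stepsize : ∀ k : ℕ, ∃ γ0 : ℝ, ∃ i : ℕ, γ0 ∈ Set.Icc γmin γmax ∧ γ k = τ ^ i * γ0 ∧
    (1 ≤ i → ∃ xh : E, IsProxMin f φ (x k) (γ k / τ) xh ∧
      nmax f φ x m k < psi f φ xh + ((δ * (γ k / τ) / 2 * ‖xh - x k‖ ^ 2 : ℝ) : EReal))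
  isMin : ∀ k : ℕ, IsProxMin f φ (x k) (γ k) (x (k + 1))
  accept : ∀ k : ℕ,
    psi f φ (x (k + 1)) + ((δ * γ k / 2 * ‖x (k + 1) - x k‖ ^ 2 : ℝ) : EReal) ≤ nmax f φ x m k

/-- `l` realizes the nonmonotone maximum `ψ(x^{l(k)}) = max_{j=0,…,m_k} ψ(x^{k-j})`,
with `l k ∈ {k - m_k, …, k}`. -/
def RealizesNMax (f : E → ℝ) (φ : E → EReal) (x : ℕ → E) (m : ℕ) (l : ℕ → ℕ) : Prop :=
  ∀ k : ℕ, k - min k m ≤ l k ∧ l k ≤ k ∧ psi f φ (x (l k)) = nmax f φ x m k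

/-- `ψ` is uniformly continuous on the sublevel set `L_ψ(x⁰)`. -/
def UnifContOnLevelSet (f : E → ℝ) (φ : E → EReal) (x0 : E) : Prop :=
  ∀ ε : ℝ, 0 < ε → ∃ η : ℝ, 0 < η ∧ ∀ u v : E,
    psi f φ u ≤ psi f φ x0 → psi f φ v ≤ psi f φ x0 → ‖u - v‖ ≤ η →
    psi f φ u ≤ psi f φ v + (ε : EReal)

/-- `φ` is continuous on its domain `dom φ`. -/
def ContOnDom (φ : E → EReal) : Prop :=
  ∀ x : E, φ x ≠ ⊤ → ∀ y : ℕ → E, (∀ j : ℕ, φ (y j) ≠ ⊤) →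
    Tendsto y atTop (𝓝 x) → Tendsto (fun j => φ (y j)) atTop (𝓝 (φ x))

/-!
If `γ_k` is large for some `k ∈ K`, the backtracking rejected the still large parameter
`γ̂ = γ_k / τ` at a trial point `x̂`. The prox inequality against the centre, the affine minorant
of `φ` and `ψ(x^k) ≤ ψ(x⁰)` give `γ̂/2 ‖x̂ - x^k‖² ≤ c₁ ‖x̂ - x^k‖ + c₂` with `c₁, c₂` bounded for
`x^k` near `x*`, so `x̂` stays in a ball around `x*` on which `∇f` is `L`-Lipschitz. There the
descent lemma shows that every parameter `γ̂ ≥ 2L / (1 - δ)` passes the acceptance test, which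
contradicts the rejection.
-/

open Metric

section GradientLipschitz

variable {F : Type*} [NormedAddCommGroup F] [InnerProductSpace ℝ F] [CompleteSpace F]

theorem Convex.le_add_inner_gradient_add_mul_sq {f : F → ℝ} {s : Set F} {L : ℝ}
    (hL0 : 0 ≤ L) (hs : Convex ℝ s) (hf : ∀ y ∈ s, DifferentiableAt ℝ f y)
    (hL : ∀ u ∈ s, ∀ v ∈ s, ‖gradient f u - gradient f v‖ ≤ L * ‖u - v‖)
    {p q : F} (hp : p ∈ s) (hq : q ∈ s) :
    f q ≤ f p + ⟪gradient f p, q - p⟫ + L * ‖q - p‖ ^ 2 := by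
  have hseg : segment ℝ p q ⊆ s := hs.segment_subset hp hq
  have hbound : ∀ y ∈ segment ℝ p q, ‖fderiv ℝ f y - fderiv ℝ f p‖ ≤ L * ‖q - p‖ := by
    intro y hy
    calc ‖fderiv ℝ f y - fderiv ℝ f p‖ = ‖gradient f y - gradient f p‖ := by
          rw [← toDual_gradient, ← toDual_gradient, ← map_sub, LinearIsometryEquiv.norm_map]
      _ ≤ L * ‖y - p‖ := hL y (hseg hy) p hp
      _ ≤ L * ‖q - p‖ := by
          have hyp : dist y p ≤ dist p q := segment_subset_closedBall_left p q hy
          rw [dist_eq_norm, dist_eq_norm'] at hyp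
          gcongr
  have hmvt := (convex_segment p q).norm_image_sub_le_of_norm_fderiv_le'
    (fun y hy => hf y (hseg hy)) hbound (left_mem_segment ℝ p q) (right_mem_segment ℝ p q)
  rw [← inner_gradient_left, Real.norm_eq_abs] at hmvt
  linarith [le_abs_self (f q - f p - ⟪gradient f p, q - p⟫)]

end GradientLipschitz

theorem le_of_half_mul_sq_le_mul_add {g t ε c₁ c₂ : ℝ} (hε : 0 < ε) (hc₁ : 0 ≤ c₁) (hc₂ : 0 ≤ c₂)
    (h : g / 2 * t ^ 2 ≤ c₁ * t + c₂) (hg : 2 * (c₁ / ε + c₂ / ε ^ 2) < g) : t ≤ ε := by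
  by_contra! hεt
  have ht : 0 < t := hε.trans hεt
  have h₁ : c₁ * t ≤ c₁ / ε * t ^ 2 := by
    rw [div_mul_eq_mul_div, le_div_iff₀ hε]
    nlinarith [mul_nonneg hc₁ ht.le]
  have h₂ : c₂ ≤ c₂ / ε ^ 2 * t ^ 2 := by
    rw [div_mul_eq_mul_div, le_div_iff₀ (by positivity)]
    nlinarith [mul_le_mul_of_nonneg_left (pow_le_pow_left₀ hε.le hεt.le 2) hc₂]
  nlinarith [mul_lt_mul_of_pos_right hg (pow_pos ht 2)]

theorem psi_eq_coe {α : Type*} {f : α → ℝ} {φ : α → EReal} {z : α} (hbot : φ z ≠ ⊥)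
    (htop : φ z ≠ ⊤) :
    psi f φ z = ((f z + (φ z).toReal : ℝ) : EReal) := by
  rw [psi, EReal.coe_add, EReal.coe_toReal htop hbot]

section ProxStep

variable {f : E → ℝ} {φ : E → EReal}

theorem IsProxMin.ne_top {xb xh : E} {g : ℝ} (hmin : IsProxMin f φ xb g xh) (hxb : φ xb ≠ ⊤) :
    φ xh ≠ ⊤ := by
  intro htop
  have h := hmin xb
  rw [proxObj, proxObj, htop, EReal.coe_add_top, top_le_iff] at h
  exact (EReal.add_lt_top (EReal.coe_ne_top _) hxb).ne h

theorem IsProxMin.le_center (hbot : ∀ z, φ z ≠ ⊥) {xb xh : E} {g : ℝ}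
    (hmin : IsProxMin f φ xb g xh) (hxb : φ xb ≠ ⊤) :
    ⟪gradient f xb, xh - xb⟫ + g / 2 * ‖xh - xb‖ ^ 2 + (φ xh).toReal ≤ (φ xb).toReal := by
  have h := hmin xb
  simp only [proxObj, sub_self, inner_zero_right, norm_zero] at h
  rw [← EReal.coe_toReal hxb (hbot xb), ← EReal.coe_toReal (hmin.ne_top hxb) (hbot xh),
    ← EReal.coe_add, ← EReal.coe_add, EReal.coe_le_coe_iff] at h
  linarith

theorem IsProxMin.norm_sub_le (hbot : ∀ z, φ z ≠ ⊥) {a : E} {b : ℝ}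
    (haff : ∀ z, ((⟪a, z⟫ + b : ℝ) : EReal) ≤ φ z) {xb xh : E} {g c ε : ℝ}
    (hmin : IsProxMin f φ xb g xh) (hxb : φ xb ≠ ⊤) (hψ : psi f φ xb ≤ c) (hε : 0 < ε)
    (hg : 2 * ((‖gradient f xb‖ + ‖a‖) / ε + |c - f xb - ⟪a, xb⟫ - b| / ε ^ 2) < g) :
    ‖xh - xb‖ ≤ ε := by
  refine le_of_half_mul_sq_le_mul_add hε (by positivity) (abs_nonneg _) ?_ hg
  have hcenter := hmin.le_center hbot hxb
  have haff_xh : ⟪a, xh⟫ + b ≤ (φ xh).toReal := by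
    have h := EReal.toReal_le_toReal (haff xh) (EReal.coe_ne_bot _) (hmin.ne_top hxb)
    rwa [EReal.toReal_coe] at h
  have hψ_xb : f xb + (φ xb).toReal ≤ c := by
    rwa [psi_eq_coe (hbot xb) hxb, EReal.coe_le_coe_iff] at hψ
  have hinner_a : ⟪a, xh⟫ = ⟪a, xb⟫ + ⟪a, xh - xb⟫ := by
    rw [← inner_add_right, add_sub_cancel]
  linarith [neg_le_of_abs_le (abs_real_inner_le_norm (gradient f xb) (xh - xb)),
    neg_le_of_abs_le (abs_real_inner_le_norm a (xh - xb)),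
    le_abs_self (c - f xb - ⟪a, xb⟫ - b)]

theorem IsProxMin.psi_add_le_of_le_model (hbot : ∀ z, φ z ≠ ⊥) {xb xh : E} {g L δ : ℝ}
    (hmin : IsProxMin f φ xb g xh) (hxb : φ xb ≠ ⊤)
    (hmodel : f xh ≤ f xb + ⟪gradient f xb, xh - xb⟫ + L * ‖xh - xb‖ ^ 2)
    (hLg : L ≤ (1 - δ) * g / 2) :
    psi f φ xh + ((δ * g / 2 * ‖xh - xb‖ ^ 2 : ℝ) : EReal) ≤ psi f φ xb := by
  rw [psi_eq_coe (hbot xh) (hmin.ne_top hxb), psi_eq_coe (hbot xb) hxb, ← EReal.coe_add,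
    EReal.coe_le_coe_iff]
  nlinarith [hmin.le_center hbot hxb, mul_le_mul_of_nonneg_right hLg (sq_nonneg ‖xh - xb‖)]

theorem IsProxMin.psi_add_le_of_lipschitzOn (hbot : ∀ z, φ z ≠ ⊥) {a : E} {b : ℝ}
    (haff : ∀ z, ((⟪a, z⟫ + b : ℝ) : EReal) ≤ φ z) (hf : Differentiable ℝ f)
    {xb xh : E} {g c ε L δ : ℝ} (hL0 : 0 ≤ L)
    (hLip : ∀ u ∈ closedBall xb ε, ∀ v ∈ closedBall xb ε,
      ‖gradient f u - gradient f v‖ ≤ L * ‖u - v‖)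
    (hmin : IsProxMin f φ xb g xh) (hxb : φ xb ≠ ⊤) (hψ : psi f φ xb ≤ c) (hε : 0 < ε)
    (hg : 2 * ((‖gradient f xb‖ + ‖a‖) / ε + |c - f xb - ⟪a, xb⟫ - b| / ε ^ 2) < g)
    (hLg : L ≤ (1 - δ) * g / 2) :
    psi f φ xh + ((δ * g / 2 * ‖xh - xb‖ ^ 2 : ℝ) : EReal) ≤ psi f φ xb := by
  have hxh : xh ∈ closedBall xb ε :=
    mem_closedBall_iff_norm.2 (hmin.norm_sub_le hbot haff hxb hψ hε hg)
  refine hmin.psi_add_le_of_le_model hbot hxb ?_ hLg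
  exact (convex_closedBall xb ε).le_add_inner_gradient_add_mul_sq hL0 (fun y _ => hf y) hLip
    (mem_closedBall_self hε.le) hxh

end ProxStep

namespace MonoPG

variable {f : E → ℝ} {φ : E → EReal} {τ γmin γmax δ : ℝ} {x : ℕ → E} {γ : ℕ → ℝ}

theorem stepsize_pos (hM : MonoPG f φ τ γmin γmax δ x γ) (hτ : 0 < τ) (hγmin : 0 < γmin)
    (k : ℕ) : 0 < γ k := by
  obtain ⟨γ0, i, hγ0, hγk, -⟩ := hM.stepsize k
  have := hγmin.trans_le hγ0.1
  rw [hγk]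
  positivity

theorem psi_le_psi_zero (hM : MonoPG f φ τ γmin γmax δ x γ) (hτ : 0 < τ) (hγmin : 0 < γmin)
    (hδ : 0 ≤ δ) (k : ℕ) : psi f φ (x k) ≤ psi f φ (x 0) := by
  refine antitone_nat_of_succ_le (fun k => le_trans ?_ (hM.accept k)) (Nat.zero_le k)
  have := hM.stepsize_pos hτ hγmin k
  exact le_add_of_nonneg_right (EReal.coe_nonneg.2 (by positivity))

theorem le_max_or_exists_rejected (hM : MonoPG f φ τ γmin γmax δ x γ) (k : ℕ) :
    γ k ≤ γmax ∨ ∃ xh : E, IsProxMin f φ (x k) (γ k / τ) xh ∧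
      psi f φ (x k) < psi f φ xh + ((δ * (γ k / τ) / 2 * ‖xh - x k‖ ^ 2 : ℝ) : EReal) := by
  obtain ⟨γ0, i, hγ0, hγk, hrejected⟩ := hM.stepsize k
  rcases Nat.eq_zero_or_pos i with rfl | hi
  · left
    rw [hγk, pow_zero, one_mul]
    exact hγ0.2
  · exact Or.inr (hrejected hi)

theorem stepsize_le (hM : MonoPG f φ τ γmin γmax δ x γ) (hbot : ∀ z, φ z ≠ ⊥) {a : E} {b : ℝ}
    (haff : ∀ z, ((⟪a, z⟫ + b : ℝ) : EReal) ≤ φ z) (hf : Differentiable ℝ f) (hτ : 1 ≤ τ)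
    (hδ : δ < 1) {k : ℕ} {c ε L M : ℝ} (hL0 : 0 ≤ L) (hε : 0 < ε)
    (hLip : ∀ u ∈ closedBall (x k) ε, ∀ v ∈ closedBall (x k) ε,
      ‖gradient f u - gradient f v‖ ≤ L * ‖u - v‖)
    (hψ : psi f φ (x k) ≤ c) (hMmax : γmax ≤ M)
    (hMΘ : 2 * ((‖gradient f (x k)‖ + ‖a‖) / ε + |c - f (x k) - ⟪a, x k⟫ - b| / ε ^ 2) < M)
    (hML : 2 * L / (1 - δ) ≤ M) :
    γ k ≤ τ * M := by
  by_contra! hlarge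
  have hM0 : 0 ≤ M := (div_nonneg (by positivity) (sub_pos.2 hδ).le).trans hML
  have hMγ : M < γ k / τ := (lt_div_iff₀' (by positivity)).2 hlarge
  rcases hM.le_max_or_exists_rejected k with hle | ⟨xh, hmin, hrejected⟩
  · linarith [le_mul_of_one_le_left hM0 hτ]
  refine hrejected.not_ge (hmin.psi_add_le_of_lipschitzOn hbot haff hf hL0 hLip (hM.dom k) hψ hε
    (hMΘ.trans hMγ) ?_)
  rw [div_le_iff₀ (sub_pos.2 hδ)] at hML
  nlinarith

end MonoPG

theorem stmt_9_general
    (f : E → ℝ) (φ : E → EReal) (hf : ContDiff ℝ 1 f)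
    (hbot : ∀ z : E, φ z ≠ ⊥)
    (τ γmin γmax δ : ℝ) (hτ : 1 < τ) (hγmin : 0 < γmin)
    (hδ : δ ∈ Set.Ioo (0 : ℝ) 1)
    (x : ℕ → E) (γ : ℕ → ℝ)
    (haff : AffineBoundedBelow φ)
    (hM : MonoPG f φ τ γmin γmax δ x γ)
    (K : ℕ → ℕ) (xstar : E)
    (hconv : Tendsto (fun n => x (K n)) atTop (𝓝 xstar))
    (hlip : ∃ L : ℝ, 0 < L ∧ ∃ U ∈ 𝓝 xstar, ∀ u ∈ U, ∀ v ∈ U,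
      ‖gradient f u - gradient f v‖ ≤ L * ‖u - v‖) :
    ∃ C : ℝ, ∀ n : ℕ, γ (K n) ≤ C := by
  obtain ⟨L, hL, U, hU, hLip⟩ := hlip
  obtain ⟨r, hr, hrU⟩ := nhds_basis_closedBall.mem_iff.1 hU
  obtain ⟨a, b, haff⟩ := haff
  set c := f (x 0) + (φ (x 0)).toReal
  have hψ (k : ℕ) : psi f φ (x k) ≤ c := by
    rw [← psi_eq_coe (hbot (x 0)) (hM.dom 0)]
    exact hM.psi_le_psi_zero (one_pos.trans hτ) hγmin hδ.1.le k
  set ε := r / 2 with hε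
  set Θ : E → ℝ := fun z => 2 * ((‖gradient f z‖ + ‖a‖) / ε + |c - f z - ⟪a, z⟫ - b| / ε ^ 2)
  have hΘ : Continuous Θ := by
    have : Continuous (gradient f) :=
      (InnerProductSpace.toDual ℝ E).symm.continuous.comp (hf.continuous_fderiv one_ne_zero)
    fun_prop
  set M := max γmax (max (Θ xstar + 1) (2 * L / (1 - δ)))
  have hnear : ∀ᶠ n in atTop, x (K n) ∈ closedBall xstar ε ∧ Θ (x (K n)) < Θ xstar + 1 :=
    (hconv.eventually (closedBall_mem_nhds xstar (by positivity))).and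
      (((hΘ.tendsto xstar).comp hconv).eventually (gt_mem_nhds (lt_add_one _)))
  have hbound : ∀ᶠ n in atTop, γ (K n) ≤ τ * M := by
    filter_upwards [hnear] with n ⟨hball, hΘn⟩
    have hsub : closedBall (x (K n)) ε ⊆ U :=
      (closedBall_subset_closedBall' (by rw [mem_closedBall] at hball; linarith)).trans hrU
    exact hM.stepsize_le hbot haff (hf.differentiable one_ne_zero) hτ.le hδ.2 hL.le
      (by positivity) (fun u hu v hv => hLip u (hsub hu) v (hsub hv)) (hψ _) (le_max_left _ _)
      (hΘn.trans_le ((le_max_left _ _).trans (le_max_right _ _)))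
      ((le_max_right _ _).trans (le_max_right _ _))
  obtain ⟨C, hC⟩ := (isBoundedUnder_of_eventually_le hbound).bddAbove_range
  exact ⟨C, fun n => hC (Set.mem_range_self n)⟩

/-- Corollary 3.5: under Assumption A, if a subsequence `x^k`, `k ∈ K`, of iterates of the
monotone proximal gradient method converges to `xstar` and `∇f` is locally Lipschitz
around `xstar`, then the subsequence `{γ_k}_{k ∈ K}` is bounded. -/
theorem stmt_9
    (f : E → ℝ) (φ : E → EReal) (hf : ContDiff ℝ 1 f)
    (hbot : ∀ z : E, φ z ≠ ⊥) (hlsc : LowerSemicontinuous φ)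
    (τ γmin γmax δ : ℝ) (hτ : 1 < τ) (hγmin : 0 < γmin) (hγmm : γmin ≤ γmax)
    (hδ : δ ∈ Set.Ioo (0 : ℝ) 1)
    (x : ℕ → E) (γ : ℕ → ℝ)
    (hpsibdd : PsiBddBelow f φ) (haff : AffineBoundedBelow φ)
    (hM : MonoPG f φ τ γmin γmax δ x γ)
    (K : ℕ → ℕ) (hK : StrictMono K) (xstar : E)
    (hconv : Tendsto (fun n => x (K n)) atTop (𝓝 xstar))
    (hlip : ∃ L : ℝ, 0 < L ∧ ∃ U ∈ 𝓝 xstar, ∀ u ∈ U, ∀ v ∈ U,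
      ‖gradient f u - gradient f v‖ ≤ L * ‖u - v‖) :
    ∃ C : ℝ, ∀ n : ℕ, γ (K n) ≤ C :=
  stmt_9_general f φ hf hbot τ γmin γmax δ hτ hγmin hδ x γ haff hM K xstar hconv hlip
end
end

section
/- Assume Assumption A holds and that φ is continuous on dom φ. Then each accumulation point x* of a sequence {x^k} generated by the monotone proximal gradient method is an M-stationary point, i.e., x* ∈ dom φ and 0 ∈ ∇f(x*) + ∂φ(x*). (Theorem 3.6, first case.) -/
open Filter Topology RealInnerProductSpace

noncomputable section

variable {E : Type*} [NormedAddCommGroup E] [InnerProductSpace ℝ E] [FiniteDimensional ℝ E]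

lemma my_gradient_inner_eq (f : E → ℝ) (x v : E) : ⟪gradient f x, v⟫ = fderiv ℝ f x v := by
  simp [gradient, InnerProductSpace.toDual_symm_apply]

lemma my_continuous_gradient {f : E → ℝ} (hf : ContDiff ℝ 1 f) : Continuous (gradient f) := by
  have h1 : Continuous (fderiv ℝ f) := hf.continuous_fderiv one_ne_zero
  exact (InnerProductSpace.toDual ℝ E).symm.continuous.comp h1

lemma my_real_ineq {f : E → ℝ} {φ : E → EReal} {xb : E} {γ : ℝ} {w : E}
    (h : IsProxMin f φ xb γ w) (hbot : ∀ z, φ z ≠ ⊥) (hw : φ w ≠ ⊤) (y : E) (hy : φ y ≠ ⊤) :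
    ⟪gradient f xb, w - xb⟫ + γ/2*‖w - xb‖^2 + (φ w).toReal ≤
      ⟪gradient f xb, y - xb⟫ + γ/2*‖y - xb‖^2 + (φ y).toReal := by
  have h1 := h y
  rw [proxObj, proxObj, ← EReal.coe_toReal hw (hbot w),
    ← EReal.coe_toReal hy (hbot y), ← EReal.coe_add, ← EReal.coe_add,
    EReal.coe_le_coe_iff] at h1
  linarith

lemma my_base {f : E → ℝ} {φ : E → EReal} {xb : E} {γ : ℝ} {w : E}
    (h : IsProxMin f φ xb γ w) (hbot : ∀ z, φ z ≠ ⊥) (hxb : φ xb ≠ ⊤) :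
    φ w ≠ ⊤ ∧ ⟪gradient f xb, w - xb⟫ + γ/2*‖w - xb‖^2 + (φ w).toReal ≤ (φ xb).toReal := by
  have hw : φ w ≠ ⊤ := by
    intro htop
    have h1 := h xb
    rw [proxObj, proxObj, htop, EReal.coe_add_top, top_le_iff] at h1
    rw [← EReal.coe_toReal hxb (hbot xb), ← EReal.coe_add] at h1
    exact EReal.coe_ne_top _ h1
  refine ⟨hw, ?_⟩
  have h2 := my_real_ineq h hbot hw xb hxb
  simp only [sub_self, inner_zero_right, norm_zero] at h2
  nlinarith [h2]

lemma my_frechet {f : E → ℝ} {φ : E → EReal} {xb : E} {γ : ℝ} {w : E}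
    (h : IsProxMin f φ xb γ w) (hbot : ∀ z, φ z ≠ ⊥) (hw : φ w ≠ ⊤) (hγ : 0 < γ) :
    -(gradient f xb + γ • (w - xb)) ∈ FrechetSubdiff φ w := by
  intro ε hε
  have hball : ∀ᶠ y in 𝓝[≠] w, dist y w < 2*ε/γ := by
    apply Filter.Eventually.filter_mono nhdsWithin_le_nhds
    exact Metric.eventually_nhds_iff.2 ⟨2*ε/γ, by positivity, fun {y} hy => hy⟩
  filter_upwards [hball] with y hy
  by_cases hyt : φ y = ⊤
  · rw [hyt]; exact le_top
  have h1 := my_real_ineq h hbot hw y hyt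
  rw [← EReal.coe_toReal hw (hbot w), ← EReal.coe_toReal hyt (hbot y),
    ← EReal.coe_add, EReal.coe_le_coe_iff]
  rw [dist_eq_norm] at hy
  have hnorm : ‖y - xb‖^2 = ‖y - w‖^2 + 2*⟪y - w, w - xb⟫ + ‖w - xb‖^2 := by
    have := norm_add_sq_real (y - w) (w - xb)
    rwa [sub_add_sub_cancel] at this
  have hinner : ⟪gradient f xb, y - xb⟫ = ⟪gradient f xb, y - w⟫ + ⟪gradient f xb, w - xb⟫ := by
    rw [← inner_add_right, sub_add_sub_cancel]
  have hη : ⟪-(gradient f xb + γ • (w - xb)), y - w⟫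
      = -⟪gradient f xb, y - w⟫ - γ * ⟪w - xb, y - w⟫ := by
    rw [inner_neg_left, inner_add_left, real_inner_smul_left]; ring
  have hqd : γ/2*‖y - w‖^2 ≤ ε*‖y - w‖ := by
    rcases le_or_gt ‖y - w‖ 0 with h0 | h0
    · have : ‖y - w‖ = 0 := le_antisymm h0 (norm_nonneg _)
      rw [this]; ring_nf; rfl
    · have h3 : γ * ‖y - w‖ ≤ 2*ε := by
        rw [lt_div_iff₀ hγ] at hy; nlinarith
      nlinarith
  have hsymm : ⟪y - w, w - xb⟫ = ⟪w - xb, y - w⟫ := real_inner_comm _ _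
  rw [hη]
  nlinarith [h1]

lemma my_bnd_of_tendsto {t : ℕ → ℝ} {l : ℝ} (h : Filter.Tendsto t atTop (𝓝 l)) :
    ∃ R : ℝ, 0 ≤ R ∧ ∀ n, t n ≤ R := by
  obtain ⟨R, hR⟩ := h.bddAbove_range
  exact ⟨max R 0, le_max_right _ _, fun n => le_trans (hR (Set.mem_range_self n)) (le_max_left _ _)⟩

lemma my_h5 {A B F pa pb γh δ t ε : ℝ} (h8 : A + pa < B + pb + δ*γh/2*t^2)
    (h9 : F + γh/2*t^2 + pb ≤ pa) (habs : B - A - F ≤ ε*t) :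
    (1-δ)*γh/2*t^2 < ε*t := by linarith

lemma my_h6 {γh t r δ : ℝ} (hδ1 : 0 < 1-δ) (hr : 0 < r) (ht : 0 ≤ t) (hγ : 0 < γh)
    (h5 : (1-δ)*γh/2*t^2 < (1-δ)*r/4*t) : γh*t < r := by
  rcases eq_or_lt_of_le ht with h0 | h0
  · rw [← h0, mul_zero]; exact hr
  · have h7 : (1-δ)*γh/2*t*t < (1-δ)*r/4*t := by nlinarith [h5]
    have h6 : (1-δ)*γh/2*t < (1-δ)*r/4 := lt_of_mul_lt_mul_right h7 ht
    nlinarith [h6, mul_pos hδ1 hr, mul_pos hγ h0]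

lemma my_quadb {G γh t ph pk A1 A2 bb na nx Rp Rx Rg ng : ℝ}
    (h1 : G + γh/2*t^2 + ph ≤ pk)
    (h2 : A1 + A2 + bb ≤ ph)
    (c1 : -(na*nx) ≤ A1) (c2 : -(na*t) ≤ A2)
    (c3 : na*nx ≤ na*Rx) (c4 : -(ng*t) ≤ G) (c5 : ng*t ≤ Rg*t)
    (hpk : pk ≤ Rp) (hb : -bb ≤ |bb|) :
    γh/2*t^2 ≤ (Rp + na*Rx + |bb| + 1) + (Rg + na)*t := by nlinarith

lemma my_small {C1 C2 G t r : ℝ} (hC1 : 0 < C1) (hC2 : 0 ≤ C2) (hr : 0 < r)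
    (hq : G/2 * t^2 ≤ C1 + C2*t) (hG : (2*C1 + 2*C2*r)/(r*r) < G) (ht : r ≤ t) : False := by
  have ht0 : 0 < t := lt_of_lt_of_le hr ht
  have h1 : 2*C1 + 2*C2*r < G*(r*r) := (div_lt_iff₀ (mul_pos hr hr)).1 hG
  have hG0 : 0 < G := by
    have h2 : 0 < 2*C1 + 2*C2*r := by positivity
    have h3 : 0 < (2*C1 + 2*C2*r)/(r*r) := by positivity
    linarith
  have hA : (2*C1 + 2*C2*r)*t < G*(r*r)*t := mul_lt_mul_of_pos_right h1 ht0
  have hB : G*t*r*r ≤ G*t*r*t := mul_le_mul_of_nonneg_left ht (by positivity)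
  have hC : G*t^2*r ≤ (2*C1 + 2*C2*t)*r := mul_le_mul_of_nonneg_right (by linarith) hr.le
  have hD : 2*C1*r ≤ 2*C1*t := mul_le_mul_of_nonneg_left ht (by linarith)
  nlinarith [hA, hB, hC, hD]

/-- Theorem 3.6, first case: under Assumption A, if `φ` is continuous on its domain, then
each accumulation point of a sequence generated by the monotone proximal gradient method
is an M-stationary point. -/
theorem stmt_10
    (f : E → ℝ) (φ : E → EReal) (hf : ContDiff ℝ 1 f)
    (hbot : ∀ z : E, φ z ≠ ⊥) (hlsc : LowerSemicontinuous φ)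
    (τ γmin γmax δ : ℝ) (hτ : 1 < τ) (hγmin : 0 < γmin) (hγmm : γmin ≤ γmax)
    (hδ : δ ∈ Set.Ioo (0 : ℝ) 1)
    (x : ℕ → E) (γ : ℕ → ℝ)
    (hpsibdd : PsiBddBelow f φ) (haff : AffineBoundedBelow φ)
    (hcont : ContOnDom φ)
    (hM : MonoPG f φ τ γmin γmax δ x γ)
    (xstar : E) (K : ℕ → ℕ) (hK : StrictMono K)
    (hconv : Tendsto (fun n => x (K n)) atTop (𝓝 xstar)) :
    MStationary f φ xstar := by
  have hgc : Continuous (gradient f) := my_continuous_gradient hf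
  obtain ⟨c, hc⟩ := hpsibdd
  obtain ⟨a, b, hab⟩ := haff
  have hγmin' : ∀ k, γmin ≤ γ k := by
    intro k
    obtain ⟨γ0, i, hγ0, hγk, -⟩ := hM.stepsize k
    have h1 : (1:ℝ) ≤ τ ^ i := one_le_pow₀ hτ.le
    nlinarith [hγ0.1, hγmin]
  have hγpos : ∀ k, 0 < γ k := fun k => lt_of_lt_of_le hγmin (hγmin' k)
  set p : ℕ → ℝ := fun k => (φ (x k)).toReal with hp
  have hφx : ∀ k, φ (x k) = ((p k : ℝ) : EReal) := fun k =>
    (EReal.coe_toReal (hM.dom k) (hbot _)).symm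
  set s : ℕ → ℝ := fun k => f (x k) + p k with hs
  have hsdef : ∀ m, s m = f (x m) + p m := fun _ => rfl
  have hψx : ∀ k, psi f φ (x k) = ((s k : ℝ) : EReal) := by
    intro k; rw [psi, hφx, ← EReal.coe_add]
  clear_value p s
  have hacc : ∀ k, s (k+1) + δ * γ k / 2 * ‖x (k+1) - x k‖^2 ≤ s k := by
    intro k
    have h1 := hM.accept k
    rw [hψx, hψx, ← EReal.coe_add, EReal.coe_le_coe_iff] at h1
    linarith
  have hterm : ∀ k, 0 ≤ δ * γ k / 2 * ‖x (k+1) - x k‖^2 := by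
    intro k
    have h1 := hγpos k
    have h2 := hδ.1
    positivity
  have hsmono : Antitone s := by
    apply antitone_nat_of_succ_le
    intro k
    have h1 := hacc k
    have h2 := hterm k
    linarith
  have hsbdd : ∀ k, c ≤ s k := by
    intro k
    have h1 := hc (x k) (hM.dom k)
    rw [hψx] at h1
    exact_mod_cast h1
  have hslim : Tendsto s atTop (𝓝 (⨅ k, s k)) :=
    tendsto_atTop_ciInf hsmono ⟨c, by rintro y ⟨k, rfl⟩; exact hsbdd k⟩
  have hquad : Tendsto (fun k => γ k * ‖x (k+1) - x k‖^2) atTop (𝓝 0) := by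
    have hdiff : Tendsto (fun k => (2/δ) * (s k - s (k+1))) atTop (𝓝 0) := by
      have h1 := (hslim.sub (hslim.comp (tendsto_add_atTop_nat 1))).const_mul (2/δ)
      simpa using h1
    refine squeeze_zero (fun k => mul_nonneg (hγpos k).le (sq_nonneg _)) (fun k => ?_) hdiff
    have h2 := hacc k
    have hδ0 := hδ.1
    have h3 : γ k * ‖x (k+1) - x k‖^2 = (2/δ) * (δ * γ k / 2 * ‖x (k+1) - x k‖^2) := by
      field_simp
    rw [h3]
    exact mul_le_mul_of_nonneg_left (by linarith) (by positivity)
  have hfK : Tendsto (fun n => f (x (K n))) atTop (𝓝 (f xstar)) :=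
    (hf.continuous.tendsto xstar).comp hconv
  have hstar_dom : φ xstar ≠ ⊤ := by
    intro htop
    have h2 : ∀ᶠ z in 𝓝 xstar, ((s 0 - f xstar + 1 : ℝ) : EReal) < φ z :=
      hlsc xstar _ (by show _ > _; rw [htop]; exact EReal.coe_lt_top _)
    have h3 := hconv.eventually h2
    have h4 : ∀ᶠ n in atTop, f xstar - 1 < f (x (K n)) :=
      hfK.eventually_const_lt (by linarith)
    obtain ⟨n, hn1, hn2⟩ := (h3.and h4).exists
    rw [hφx, EReal.coe_lt_coe_iff] at hn1
    have h5 : s (K n) ≤ s 0 := hsmono (Nat.zero_le _)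
    rw [hsdef] at h5
    linarith
  refine ⟨hstar_dom, ?_⟩
  by_cases hcase : ∃ C : ℝ, ∃ᶠ n in atTop, γ (K n) ≤ C
  · -- bounded stepsize case
    obtain ⟨C, hC⟩ := hcase
    obtain ⟨σ, hσmono, hσle⟩ := Filter.extraction_of_frequently_atTop hC
    set k : ℕ → ℕ := fun n => K (σ n) with hk
    have hkT : Tendsto k atTop atTop := (hK.comp hσmono).tendsto_atTop
    have hxk : Tendsto (fun n => x (k n)) atTop (𝓝 xstar) := hconv.comp hσmono.tendsto_atTop
    set d : ℕ → E := fun n => x (k n + 1) - x (k n) with hd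
    have hq : Tendsto (fun n => γ (k n) * ‖d n‖^2) atTop (𝓝 0) := hquad.comp hkT
    have hn2 : Tendsto (fun n => ‖d n‖^2) atTop (𝓝 0) := by
      refine squeeze_zero (fun n => sq_nonneg _) (fun n => ?_)
        (by simpa using hq.const_mul γmin⁻¹)
      have h2 := mul_le_mul_of_nonneg_right (hγmin' (k n)) (sq_nonneg ‖d n‖)
      calc ‖d n‖^2 = γmin⁻¹ * (γmin * ‖d n‖^2) := by
            rw [← mul_assoc, inv_mul_cancel₀ (ne_of_gt hγmin), one_mul]
        _ ≤ γmin⁻¹ * (γ (k n) * ‖d n‖^2) := mul_le_mul_of_nonneg_left h2 (by positivity)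
    have hnorm : Tendsto (fun n => ‖d n‖) atTop (𝓝 0) := by
      have h1 := (Real.continuous_sqrt.tendsto 0).comp hn2
      rw [Real.sqrt_zero] at h1
      exact h1.congr (fun n => Real.sqrt_sq (norm_nonneg _))
    have hd0 : Tendsto d atTop (𝓝 0) := tendsto_zero_iff_norm_tendsto_zero.2 hnorm
    have hgd : Tendsto (fun n => γ (k n) • d n) atTop (𝓝 0) := by
      refine squeeze_zero_norm (fun n => ?_) (by simpa using hnorm.const_mul C)
      rw [norm_smul, Real.norm_eq_abs, abs_of_pos (hγpos _)]
      exact mul_le_mul_of_nonneg_right (hσle n) (norm_nonneg _)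
    have huT : Tendsto (fun n => x (k n + 1)) atTop (𝓝 xstar) := by
      have h1 := hxk.add hd0
      rw [add_zero] at h1
      exact h1.congr (fun n => by simp [hd])
    have hvT : Tendsto (fun n => -(gradient f (x (k n)) + γ (k n) • d n)) atTop
        (𝓝 (-gradient f xstar)) := by
      have h1 := (((hgc.tendsto xstar).comp hxk).add hgd).neg
      rw [add_zero] at h1
      exact h1
    exact ⟨fun n => x (k n + 1), fun n => -(gradient f (x (k n)) + γ (k n) • d n), huT,
      hcont xstar hstar_dom _ (fun n => hM.dom _) huT, hvT,
      fun n => my_frechet (hM.isMin (k n)) hbot (hM.dom _) (hγpos _)⟩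
  · -- unbounded stepsize case
    push_neg at hcase
    have hT : Tendsto (fun n => γ (K n)) atTop atTop := by
      rw [tendsto_atTop]
      intro b
      have h1 := hcase b
      exact h1.mono (fun n h => h.le)
    have key : ∀ m : ℕ, γmax < γ m → ∃ xh, IsProxMin f φ (x m) (γ m / τ) xh ∧
        psi f φ (x m) < psi f φ xh + ((δ * (γ m / τ) / 2 * ‖xh - x m‖ ^ 2 : ℝ) : EReal) := by
      intro m hm
      obtain ⟨γ0, i, hγ0, hγeq, hi⟩ := hM.stepsize m
      rcases Nat.eq_zero_or_pos i with h0 | h0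
      · exfalso
        rw [h0, pow_zero, one_mul] at hγeq
        rw [hγeq] at hm
        exact absurd hγ0.2 (not_le.2 hm)
      · exact hi h0
    obtain ⟨N, hN⟩ := eventually_atTop.1 (hT.eventually_gt_atTop γmax)
    set k : ℕ → ℕ := fun n => K (n + N) with hk
    have hbig : ∀ n, γmax < γ (k n) := fun n => hN (n + N) (Nat.le_add_left N n)
    have hxk : Tendsto (fun n => x (k n)) atTop (𝓝 xstar) :=
      hconv.comp (tendsto_add_atTop_nat N)
    have hγT : Tendsto (fun n => γ (k n)) atTop atTop := hT.comp (tendsto_add_atTop_nat N)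
    choose xh hxmin hxfail using fun n => key (k n) (hbig n)
    have hτ0 : (0:ℝ) < τ := by linarith
    set γh : ℕ → ℝ := fun n => γ (k n) / τ with hγh
    have hγhpos : ∀ n, 0 < γh n := fun n => div_pos (hγpos _) hτ0
    have hγhT : Tendsto γh atTop atTop := hγT.atTop_div_const hτ0
    set dh : ℕ → E := fun n => xh n - x (k n) with hdh
    have hbase := fun n => my_base (hxmin n) hbot (hM.dom (k n))
    have hxh_ne : ∀ n, φ (xh n) ≠ ⊤ := fun n => (hbase n).1
    set ph : ℕ → ℝ := fun n => (φ (xh n)).toReal with hph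
    have hb2 : ∀ n, ⟪gradient f (x (k n)), dh n⟫ + γh n/2*‖dh n‖^2 + ph n ≤ p (k n) := by
      intro n
      have h := (hbase n).2
      simp only [hp]
      exact h
    have hgk : Tendsto (fun n => gradient f (x (k n))) atTop (𝓝 (gradient f xstar)) :=
      (hgc.tendsto xstar).comp hxk
    obtain ⟨Rg, hRg0, hRg⟩ := my_bnd_of_tendsto hgk.norm
    obtain ⟨Rx, hRx0, hRx⟩ := my_bnd_of_tendsto hxk.norm
    have hpk : Tendsto (fun n => p (k n)) atTop (𝓝 ((φ xstar).toReal)) := by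
      have h1 := hcont xstar hstar_dom (fun n => x (k n)) (fun n => hM.dom _) hxk
      rw [← EReal.coe_toReal hstar_dom (hbot xstar)] at h1
      have h2 : Tendsto (fun n => ((p (k n) : ℝ) : EReal)) atTop
          (𝓝 (((φ xstar).toReal : ℝ) : EReal)) := h1.congr (fun n => hφx (k n))
      exact EReal.tendsto_coe.1 h2
    obtain ⟨Rp, hRp0, hRp⟩ := my_bnd_of_tendsto hpk
    set C1 : ℝ := Rp + ‖a‖ * Rx + |b| + 1 with hC1
    set C2 : ℝ := Rg + ‖a‖ with hC2
    have hC1pos : 0 < C1 := by positivity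
    have hC2nn : 0 ≤ C2 := by positivity
    have hquadb : ∀ n, γh n/2 * ‖dh n‖^2 ≤ C1 + C2 * ‖dh n‖ := by
      intro n
      have h1 := hb2 n
      have h2 : (⟪a, xh n⟫ + b : ℝ) ≤ ph n := by
        have h2' := hab (xh n)
        rw [← EReal.coe_toReal (hxh_ne n) (hbot _)] at h2'
        exact_mod_cast h2'
      have h3 : ⟪a, xh n⟫ = ⟪a, x (k n)⟫ + ⟪a, dh n⟫ := by
        rw [← inner_add_right]
        congr 1
        simp [hdh]
      have c1 := abs_le.1 (abs_real_inner_le_norm a (x (k n)))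
      have c2 := abs_le.1 (abs_real_inner_le_norm a (dh n))
      have c3 : ‖a‖ * ‖x (k n)‖ ≤ ‖a‖ * Rx := mul_le_mul_of_nonneg_left (hRx n) (norm_nonneg a)
      have c4 := abs_le.1 (abs_real_inner_le_norm (gradient f (x (k n))) (dh n))
      have c5 : ‖gradient f (x (k n))‖ * ‖dh n‖ ≤ Rg * ‖dh n‖ :=
        mul_le_mul_of_nonneg_right (hRg n) (norm_nonneg _)
      rw [h3] at h2
      rw [hC1, hC2]
      exact my_quadb h1 h2 c1.1 c2.1 c3 c4.1 c5 (hRp n) (neg_le_abs b)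
    have hdh0 : Tendsto (fun n => ‖dh n‖) atTop (𝓝 0) := by
      rw [tendsto_order]
      constructor
      · intro r hr
        exact Eventually.of_forall (fun n => lt_of_lt_of_le hr (norm_nonneg _))
      · intro r hr
        filter_upwards [hγhT.eventually_gt_atTop ((2*C1 + 2*C2*r)/(r*r))] with n hn
        by_contra hcon
        push_neg at hcon
        exact my_small hC1pos hC2nn hr (hquadb n) hn hcon
    have hdh0' : Tendsto dh atTop (𝓝 0) := tendsto_zero_iff_norm_tendsto_zero.2 hdh0
    have hxhT : Tendsto xh atTop (𝓝 xstar) := by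
      have h1 := hxk.add hdh0'
      rw [add_zero] at h1
      exact h1.congr (fun n => by simp [hdh])
    have hfailr : ∀ n, f (x (k n)) + p (k n) < f (xh n) + ph n + δ * γh n/2 * ‖dh n‖^2 := by
      intro n
      have h1 := hxfail n
      have h2 : psi f φ (xh n) = ((f (xh n) + ph n : ℝ) : EReal) := by
        rw [psi, ← EReal.coe_toReal (hxh_ne n) (hbot _), ← EReal.coe_add]
      rw [hψx, h2, ← EReal.coe_add, EReal.coe_lt_coe_iff, hsdef] at h1
      convert h1 using 2
    have hγd : Tendsto (fun n => γh n * ‖dh n‖) atTop (𝓝 0) := by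
      rw [tendsto_order]
      constructor
      · intro r hr
        refine Eventually.of_forall (fun n => lt_of_lt_of_le hr ?_)
        exact mul_nonneg (hγhpos n).le (norm_nonneg _)
      · intro r hr
        have hδ1 : 0 < 1 - δ := by linarith [hδ.2]
        set ε : ℝ := (1-δ)*r/4 with hεdef
        have hε : 0 < ε := by positivity
        have hFc : Continuous (fderiv ℝ f) := hf.continuous_fderiv one_ne_zero
        have hUC := (isCompact_closedBall xstar 2).uniformContinuousOn_of_continuous
          hFc.continuousOn
        obtain ⟨η, hη, hηp⟩ := Metric.uniformContinuousOn_iff.1 hUC ε hε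
        have e1 : ∀ᶠ n in atTop, dist (x (k n)) xstar < 1 := Metric.tendsto_nhds.1 hxk 1 one_pos
        have e2 : ∀ᶠ n in atTop, ‖dh n‖ < min 1 η :=
          hdh0.eventually_lt_const (lt_min one_pos hη)
        filter_upwards [e1, e2] with n h1 h2
        have hseg : ∀ z ∈ segment ℝ (x (k n)) (xh n),
            ‖fderiv ℝ f z - fderiv ℝ f (x (k n))‖ ≤ ε := by
          intro z hz
          have hdist : dist (x (k n)) z ≤ dist (x (k n)) (xh n) := by
            have h3 := dist_add_dist_of_mem_segment hz
            linarith [dist_nonneg (x := z) (y := xh n)]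
          have hdn : dist (x (k n)) (xh n) = ‖dh n‖ := by
            rw [dist_eq_norm, ← norm_neg]
            congr 1
            simp [hdh]
          have hzx : dist z (x (k n)) < min 1 η := by
            rw [dist_comm]
            exact lt_of_le_of_lt (hdn ▸ hdist) h2
          have hz2 : z ∈ Metric.closedBall xstar 2 := by
            rw [Metric.mem_closedBall]
            have h4 := dist_triangle z (x (k n)) xstar
            have h5 : dist z (x (k n)) < 1 := lt_of_lt_of_le hzx (min_le_left _ _)
            linarith
          have hx2 : x (k n) ∈ Metric.closedBall xstar 2 := by
            rw [Metric.mem_closedBall]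
            linarith
          have h6 := hηp z hz2 (x (k n)) hx2 (lt_of_lt_of_le hzx (min_le_right _ _))
          rw [dist_eq_norm] at h6
          exact h6.le
        have hmvt := (convex_segment (x (k n)) (xh n)).norm_image_sub_le_of_norm_hasFDerivWithin_le'
          (fun z _ => ((hf.differentiable one_ne_zero) z).hasFDerivAt.hasFDerivWithinAt)
          hseg (left_mem_segment ℝ _ _) (right_mem_segment ℝ _ _)
        have hginner : ⟪gradient f (x (k n)), dh n⟫ = fderiv ℝ f (x (k n)) (dh n) :=
          my_gradient_inner_eq f (x (k n)) (dh n)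
        have habs : f (xh n) - f (x (k n)) - fderiv ℝ f (x (k n)) (dh n) ≤ ε * ‖dh n‖ := by
          have h7 := le_trans (le_abs_self _) ((Real.norm_eq_abs _) ▸ hmvt)
          exact h7
        have h8 := hfailr n
        have h9 := hb2 n
        rw [hginner] at h9
        have h5 := my_h5 h8 h9 habs
        rw [hεdef] at h5
        exact my_h6 hδ1 hr (norm_nonneg (dh n)) (hγhpos n) h5
    have hγdvec : Tendsto (fun n => γh n • dh n) atTop (𝓝 0) := by
      refine squeeze_zero_norm (fun n => ?_) hγd
      rw [norm_smul, Real.norm_eq_abs, abs_of_pos (hγhpos n)]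
    have hvT : Tendsto (fun n => -(gradient f (x (k n)) + γh n • dh n)) atTop
        (𝓝 (-gradient f xstar)) := by
      have h1 := (hgk.add hγdvec).neg
      rw [add_zero] at h1
      exact h1
    exact ⟨xh, fun n => -(gradient f (x (k n)) + γh n • dh n), hxhT,
      hcont xstar hstar_dom xh hxh_ne hxhT, hvT,
      fun n => my_frechet (hxmin n) hbot (hxh_ne n) (hγhpos n)⟩
end
end
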